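/- arXiv:2010.11469 — 6 statements merged into one kernel-verified Lean document; each statement's English description precedes it below -/
import Mathlib

section
/- Let G be a finite group, a ∈ G \ Z(G), and suppose nacent(G) = {G, C(a)}. Then for every s ∈ C(a) \ Z(G), the centralizer C(s) is contained in C(a). -/
open Subgroup

/-- `Cent(G)`: the set of element centralizers of `G`. -/
def elemCentralizers (G : Type*) [Group G] : Set (Subgroup G) :=
  {H | ∃ x : G, H = Subgroup.centralizer {x}}

/-- `nacent(G)`: the set of non-abelian element centralizers of `G`. -/
def nacent (G : Type*) [Group G] : Set (Subgroup G) :=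
  {H | H ∈ elemCentralizers G ∧ ¬ IsMulCommutative H}

/-- A group is a CA-group if the centralizer of every non-central element is abelian. -/
def IsCAGroup (H : Type*) [Group H] : Prop :=
  ∀ h : H, h ∉ Subgroup.center H → IsMulCommutative (Subgroup.centralizer {h} : Subgroup H)

/-- The Hughes subgroup `H_p(K)`, generated by the elements of order `≠ p`. -/
def hughesSubgroup (p : ℕ) (K : Type*) [Group K] : Subgroup K :=
  Subgroup.closure {x : K | orderOf x ≠ p}

/-- The conjugate `g H g⁻¹` of a subgroup. -/
def conjSubgroup {F : Type*} [Group F] (g : F) (H : Subgroup F) : Subgroup F :=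
  H.map (MulAut.conj g).toMonoidHom

/-- `F` is a Frobenius group with kernel `N` and complement `H`. -/
def IsFrobeniusWithKernel {F : Type*} [Group F] (N H : Subgroup F) : Prop :=
  N.Normal ∧ N ⊓ H = ⊥ ∧ N ⊔ H = ⊤ ∧ N ≠ ⊥ ∧ H ≠ ⊥ ∧
    ∀ g : F, g ∉ H → H ⊓ conjSubgroup g H = ⊥

/-- `F` is a Frobenius group with complement `H`. -/
def IsFrobeniusWithComplement {F : Type*} [Group F] (H : Subgroup F) : Prop :=
  H ≠ ⊥ ∧ H ≠ ⊤ ∧ ∀ g : F, g ∉ H → H ⊓ conjSubgroup g H = ⊥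

/-
A non-abelian `C(s)` lies in `nacent G = {G, C(a)}` and cannot be `G` because `s` is not
central, so it is `C(a)`. An abelian `C(s)` contains `a` and hence centralizes it.
-/

theorem mem_centralizer_singleton_comm {G : Type*} [Group G] {a s : G}
    (h : s ∈ centralizer {a}) : a ∈ centralizer {s} :=
  mem_centralizer_singleton_iff.mpr (mem_centralizer_singleton_iff.mp h).symm

theorem le_centralizer_singleton_of_mem {G : Type*} [Group G] {H : Subgroup G}
    [IsMulCommutative H] {a : G} (ha : a ∈ H) : H ≤ centralizer {a} :=
  (le_centralizer H).trans (centralizer_le (Set.singleton_subset_iff.mpr ha))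

theorem centralizer_singleton_ne_top {G : Type*} [Group G] {s : G} (hs : s ∉ center G) :
    centralizer {s} ≠ ⊤ :=
  fun h => hs (centralizer_eq_top_iff_subset.mp h rfl)

theorem stmt_1_general {G : Type*} [Group G] (a : G)
    (hna : nacent G = {⊤, Subgroup.centralizer {a}}) :
    ∀ s : G, s ∈ Subgroup.centralizer ({a} : Set G) → s ∉ Subgroup.center G →
      Subgroup.centralizer {s} ≤ Subgroup.centralizer ({a} : Set G) := by
  intro s hs hsZ
  by_cases hcomm : IsMulCommutative (centralizer {s})
  · exact le_centralizer_singleton_of_mem (mem_centralizer_singleton_comm hs)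
  · have hnacent : centralizer {s} ∈ nacent G := ⟨⟨s, rfl⟩, hcomm⟩
    rw [hna] at hnacent
    rcases hnacent with htop | heq
    · exact absurd htop (centralizer_singleton_ne_top hsZ)
    · exact heq.le

theorem stmt_1 {G : Type*} [Group G] [Finite G] (a : G)
    (ha : a ∉ Subgroup.center G)
    (hna : nacent G = {⊤, Subgroup.centralizer {a}})
    (hpr : Subgroup.centralizer {a} ≠ (⊤ : Subgroup G)) :
    ∀ s : G, s ∈ Subgroup.centralizer ({a} : Set G) → s ∉ Subgroup.center G →
      Subgroup.centralizer {s} ≤ Subgroup.centralizer ({a} : Set G) :=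
  stmt_1_general a hna
end

section
/- Let G be a finite group, a ∈ G \ Z(G), and suppose nacent(G) = {G, C(a)}. Then for every x ∈ G \ C(a), C(a) ∩ C(x) = Z(G). -/
open Subgroup

theorem Subgroup.mem_centralizer_singleton_comm {G : Type*} [Group G] {g k : G} :
    g ∈ centralizer {k} ↔ k ∈ centralizer {g} := by
  simp only [mem_centralizer_singleton_iff, eq_comm]

theorem isMulCommutative_centralizer_or_eq_of_nacent_eq {G : Type*} [Group G] {a y : G}
    (hna : nacent G = {⊤, centralizer {a}}) (hy : y ∉ center G) :
    IsMulCommutative (centralizer {y}) ∨ centralizer {y} = centralizer {a} := by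
  by_contra! ⟨hnc, hne⟩
  have hmem : centralizer {y} ∈ nacent G := ⟨⟨y, rfl⟩, hnc⟩
  rw [hna] at hmem
  rcases hmem with htop | heq
  · exact hy (centralizer_eq_top_iff_subset.mp htop rfl)
  · exact hne heq

theorem stmt_2_general {G : Type*} [Group G] (a : G)
    (hna : nacent G = {⊤, Subgroup.centralizer {a}}) :
    ∀ x : G, x ∉ Subgroup.centralizer ({a} : Set G) →
      Subgroup.centralizer ({a} : Set G) ⊓ Subgroup.centralizer {x} =
        Subgroup.center G := by
  intro x hx
  refine le_antisymm (fun y hy => ?_) (le_inf (center_le_centralizer _) (center_le_centralizer _))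
  obtain ⟨hya, hyx⟩ := mem_inf.mp hy
  have hay : a ∈ centralizer {y} := mem_centralizer_singleton_comm.mp hya
  have hxy : x ∈ centralizer {y} := mem_centralizer_singleton_comm.mp hyx
  by_contra hyc
  rcases isMulCommutative_centralizer_or_eq_of_nacent_eq hna hyc with hc | heq
  · exact hx (mem_centralizer_singleton_iff.mpr (setLike_mul_comm hay hxy).symm)
  · exact hx (heq ▸ hxy)

theorem stmt_2 {G : Type*} [Group G] [Finite G] (a : G)
    (ha : a ∉ Subgroup.center G)
    (hna : nacent G = {⊤, Subgroup.centralizer {a}})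
    (hpr : Subgroup.centralizer {a} ≠ (⊤ : Subgroup G)) :
    ∀ x : G, x ∉ Subgroup.centralizer ({a} : Set G) →
      Subgroup.centralizer ({a} : Set G) ⊓ Subgroup.centralizer {x} =
        Subgroup.center G :=
  stmt_2_general a hna
end

section
/- Let G be a finite group, a ∈ G \ Z(G), and suppose nacent(G) = {G, C(a)}. Then for any x, y ∈ G \ C(a), either C(x) = C(y) or C(x) ∩ C(y) = Z(G). -/
open Subgroup

/-!
If `nacent G = {G, C(a)}`, then every centralizer `C(z)` with `z` non-central and `C(z) ⊄ C(a)`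
is abelian. An abelian centralizer `C(x)` is contained in `C(z)` for each of its elements `z`,
so two such abelian centralizers sharing an element coincide. Hence for `x, y ∉ C(a)`, a
non-central `z ∈ C(x) ∩ C(y)` forces `C(x) = C(z) = C(y)`.
-/

namespace Subgroup

variable {G : Type*} [Group G]

theorem mem_centralizer_singleton_comm_s3 {g k : G} :
    k ∈ centralizer {g} ↔ g ∈ centralizer {k} := by
  simp only [mem_centralizer_singleton_iff, eq_comm]

theorem centralizer_singleton_le_of_mem {x z : G} [IsMulCommutative (centralizer {x})]
    (hz : z ∈ centralizer {x}) : centralizer {x} ≤ centralizer {z} :=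
  (le_centralizer _).trans (centralizer_le (Set.singleton_subset_iff.mpr hz))

theorem centralizer_singleton_eq_of_mem {x z : G} [IsMulCommutative (centralizer {x})]
    [IsMulCommutative (centralizer {z})] (hz : z ∈ centralizer {x}) :
    centralizer {x} = centralizer {z} :=
  (centralizer_singleton_le_of_mem hz).antisymm
    (centralizer_singleton_le_of_mem (mem_centralizer_singleton_comm_s3.mp hz))

end Subgroup

theorem isMulCommutative_centralizer_of_nacent_eq {G : Type*} [Group G] {a x z : G}
    (hna : nacent G = {⊤, centralizer {a}}) (hz : z ∉ center G)
    (hxz : x ∈ centralizer {z}) (hxa : x ∉ centralizer {a}) :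
    IsMulCommutative (centralizer {z}) := by
  by_contra hnc
  have hmem : centralizer {z} ∈ nacent G := ⟨⟨z, rfl⟩, hnc⟩
  rw [hna] at hmem
  rcases hmem with htop | hza
  · exact hz (by simpa only [centralizer_eq_top_iff_subset, Set.singleton_subset_iff,
      SetLike.mem_coe] using htop)
  · exact hxa (hza ▸ hxz)

theorem stmt_3_general {G : Type*} [Group G] (a : G)
    (hna : nacent G = {⊤, Subgroup.centralizer {a}}) :
    ∀ x y : G, x ∉ Subgroup.centralizer ({a} : Set G) →
      y ∉ Subgroup.centralizer ({a} : Set G) →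
      Subgroup.centralizer {x} = Subgroup.centralizer {y} ∨
        Subgroup.centralizer {x} ⊓ Subgroup.centralizer {y} = Subgroup.center G := by
  intro x y hx hy
  rw [or_iff_not_imp_right]
  intro hne
  obtain ⟨z, ⟨hzx, hzy⟩, hz⟩ : ∃ z ∈ centralizer {x} ⊓ centralizer {y}, z ∉ center G := by
    by_contra! h
    exact hne (le_antisymm h (le_inf (center_le_centralizer _) (center_le_centralizer _)))
  have abelian_of_notMem {w : G} (hw : w ∉ centralizer {a}) :
      IsMulCommutative (centralizer {w}) :=
    isMulCommutative_centralizer_of_nacent_eq hna (fun h ↦ hw (center_le_centralizer _ h))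
      (mem_centralizer_singleton_iff.mpr rfl) hw
  have := abelian_of_notMem hx
  have := abelian_of_notMem hy
  have : IsMulCommutative (centralizer {z}) := isMulCommutative_centralizer_of_nacent_eq hna hz
    (mem_centralizer_singleton_comm_s3.mp hzx) hx
  exact (centralizer_singleton_eq_of_mem hzx).trans (centralizer_singleton_eq_of_mem hzy).symm

theorem stmt_3 {G : Type*} [Group G] [Finite G] (a : G)
    (ha : a ∉ Subgroup.center G)
    (hna : nacent G = {⊤, Subgroup.centralizer {a}})
    (hpr : Subgroup.centralizer {a} ≠ (⊤ : Subgroup G)) :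
    ∀ x y : G, x ∉ Subgroup.centralizer ({a} : Set G) →
      y ∉ Subgroup.centralizer ({a} : Set G) →
      Subgroup.centralizer {x} = Subgroup.centralizer {y} ∨
        Subgroup.centralizer {x} ⊓ Subgroup.centralizer {y} = Subgroup.center G :=
  stmt_3_general a hna
end

section
/- Let G be a finite group, a ∈ G \ Z(G), and suppose nacent(G) = {G, C(a)}. Then C(a) is a normal subgroup of G. -/
/-!
Conjugation by `g` carries `C(a)` onto `C(g a g⁻¹)` and preserves non-commutativity, so
`C(g a g⁻¹) ∈ nacent(G) = {G, C(a)}`. It is not `G`, since `g a g⁻¹` is not central, so every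
conjugate of `C(a)` equals `C(a)`.
-/

open Subgroup

namespace Subgroup

variable {G G' : Type*} [Group G] [Group G']

theorem map_equiv_centralizer (e : G ≃* G') (s : Set G) :
    (centralizer s).map e.toMonoidHom = centralizer (e '' s) := by
  ext x
  simp only [mem_map_equiv, mem_centralizer_iff, Set.forall_mem_image]
  refine forall₂_congr fun y _ ↦ ?_
  rw [← e.apply_eq_iff_eq, map_mul, map_mul, MulEquiv.apply_symm_apply]

theorem isMulCommutative_map_equiv_iff (e : G ≃* G') (H : Subgroup G) :
    IsMulCommutative (H.map e.toMonoidHom) ↔ IsMulCommutative H := by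
  refine ⟨fun _ ↦ .of_setLike_mul_comm fun x hx y hy ↦ e.injective ?_, fun _ ↦ inferInstance⟩
  simpa using setLike_mul_comm (mem_map_of_mem e.toMonoidHom hx) (mem_map_of_mem _ hy)

end Subgroup

section

variable {G : Type*} [Group G]

theorem centralizer_conj_mul (g x : G) :
    centralizer {g * x * g⁻¹} = conjSubgroup g (centralizer {x}) := by
  rw [conjSubgroup, map_equiv_centralizer, Set.image_singleton, MulAut.conj_apply]

theorem conjSubgroup_mem_nacent {H : Subgroup G} (hH : H ∈ nacent G) (g : G) :
    conjSubgroup g H ∈ nacent G := by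
  obtain ⟨⟨x, rfl⟩, hnc⟩ := hH
  exact ⟨⟨g * x * g⁻¹, (centralizer_conj_mul g x).symm⟩,
    by rwa [conjSubgroup, isMulCommutative_map_equiv_iff]⟩

theorem mem_center_of_conjSubgroup_centralizer_eq_top {g x : G}
    (h : conjSubgroup g (centralizer {x}) = ⊤) : x ∈ center G := by
  rw [← centralizer_conj_mul, centralizer_eq_top_iff_subset, Set.singleton_subset_iff] at h
  simpa [mul_assoc] using Normal.conj_mem inferInstance _ h g⁻¹

end

theorem stmt_5_general {G : Type*} [Group G] (a : G)
    (ha : a ∉ Subgroup.center G)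
    (hna : nacent G = {⊤, Subgroup.centralizer {a}}) :
    (Subgroup.centralizer ({a} : Set G)).Normal := by
  have hCa : centralizer {a} ∈ nacent G := hna ▸ Or.inr rfl
  refine normal_iff_map_conj_eq.mpr fun g ↦ ?_
  rcases hna ▸ conjSubgroup_mem_nacent hCa g with htop | hfix
  · exact absurd (mem_center_of_conjSubgroup_centralizer_eq_top htop) ha
  · exact hfix

theorem stmt_5 {G : Type*} [Group G] [Finite G] (a : G)
    (ha : a ∉ Subgroup.center G)
    (hna : nacent G = {⊤, Subgroup.centralizer {a}})
    (hpr : Subgroup.centralizer {a} ≠ (⊤ : Subgroup G)) :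
    (Subgroup.centralizer ({a} : Set G)).Normal :=
  stmt_5_general a ha hna
end

section
/- Let G be a finite group, a ∈ G \ Z(G), with nacent(G) = {G, C(a)}, and suppose G/Z(G) = (C(a)/Z(G)) ⋊ (C(x)/Z(G)) is a Frobenius group with Frobenius kernel C(a)/Z(G) for some x ∈ G \ C(a). Then |Cent(G)| = |Cent(C(a))| + |C(a)/Z(G)| + 1. -/
/-!
Work in the Frobenius group `G/Z(G) = K ⋊ H` with `K = C(a)/Z(G)`, `H = C(x)/Z(G)`. A nontrivial
element of a Frobenius kernel has its centralizer inside the kernel, so `C(y) ≤ C(a)` for every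
non-central `y ∈ C(a)`; these centralizers are exactly the images of `Cent(C(a))`. Every element
outside the kernel is conjugate into the complement, so each `y ∉ C(a)` commutes with a conjugate
of `x`. Both lie outside `C(a)`, so by the hypothesis on `nacent(G)` both have abelian
centralizers, and hence `C(y)` is a conjugate of `C(x)`. Since `H` is self-normalizing so is
`C(x)`, which therefore has `|G : C(x)| = |G/Z(G) : H| = |K|` conjugates. Adding `G = C(1)`
accounts for all of `Cent(G)`.
-/

open Subgroup

open Pointwise

namespace IsFrobeniusWithKernel

variable {F : Type*} [Group F] {N H : Subgroup F}

theorem mem_of_conj_mem (hf : IsFrobeniusWithKernel N H) {g h : F} (hh : h ∈ H) (h1 : h ≠ 1)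
    (hgh : g * h * g⁻¹ ∈ H) : g ∈ H := by
  by_contra hg
  have hmem : g * h * g⁻¹ ∈ H ⊓ conjSubgroup g H := ⟨hgh, h, hh, rfl⟩
  rw [hf.2.2.2.2.2 g hg, mem_bot, conj_eq_one_iff] at hmem
  exact h1 hmem

theorem normalizer_eq (hf : IsFrobeniusWithKernel N H) : normalizer (H : Set F) = H := by
  refine le_antisymm (fun g hg => ?_) le_normalizer
  obtain ⟨⟨h, hh⟩, h1⟩ := ne_bot_iff_exists_ne_one.mp hf.2.2.2.2.1
  exact hf.mem_of_conj_mem hh (by simpa using h1) ((mem_normalizer_iff.mp hg h).mp hh)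

theorem eq_and_eq_of_conj_eq (hf : IsFrobeniusWithKernel N H) {n n' h h' : F} (hn : n ∈ N)
    (hn' : n' ∈ N) (hh : h ∈ H) (hh' : h' ∈ H) (h1 : h ≠ 1)
    (heq : n * h * n⁻¹ = n' * h' * n'⁻¹) : n = n' ∧ h = h' := by
  have hconj : (n'⁻¹ * n) * h * (n'⁻¹ * n)⁻¹ = h' :=
    calc (n'⁻¹ * n) * h * (n'⁻¹ * n)⁻¹ = n'⁻¹ * (n * h * n⁻¹) * n' := by group
      _ = h' := by rw [heq]; group
  have hH : n'⁻¹ * n ∈ H := hf.mem_of_conj_mem hh h1 (hconj ▸ hh')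
  have hN : n'⁻¹ * n ∈ N := N.mul_mem (N.inv_mem hn') hn
  have h1' : n'⁻¹ * n = 1 := by
    simpa [hf.2.1] using (show n'⁻¹ * n ∈ N ⊓ H from ⟨hN, hH⟩)
  obtain rfl : n = n' := (inv_mul_eq_one.mp h1').symm
  exact ⟨rfl, by simpa using hconj⟩

theorem isComplement' (hf : IsFrobeniusWithKernel N H) : N.IsComplement' H :=
  have := hf.1
  isComplement'_of_disjoint_and_mul_eq_univ (disjoint_iff.mpr hf.2.1)
    (by rw [← normal_mul, hf.2.2.1, coe_top])

-- `(n, h) ↦ n * h * n⁻¹` embeds `N × (H \ {1})` into `F \ N`, and both sets have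
-- `|N| (|H| - 1)` elements.
theorem exists_conj_eq [Finite F] (hf : IsFrobeniusWithKernel N H) {q : F} (hq : q ∉ N) :
    ∃ n ∈ N, ∃ h ∈ H, n * h * n⁻¹ = q := by
  let φ : N × ({1}ᶜ : Set H) → ((N : Set F)ᶜ : Set F) := fun p =>
    ⟨p.1 * p.2.1 * p.1⁻¹, fun hmem => p.2.2 <| Subtype.ext <| by
      have : (p.2.1 : F) ∈ N := by simpa [mul_assoc] using hf.1.conj_mem _ hmem (p.1 : F)⁻¹
      simpa [hf.2.1] using (show (p.2.1 : F) ∈ N ⊓ H from ⟨this, p.2.1.2⟩)⟩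
  have hφ : Function.Injective φ := by
    rintro ⟨n, h, h1⟩ ⟨n', h', _⟩ hφeq
    obtain ⟨hn, hh⟩ :=
      hf.eq_and_eq_of_conj_eq n.2 n'.2 h.2 h'.2 (by simpa using h1) (congrArg Subtype.val hφeq)
    exact Prod.ext (Subtype.ext hn) (Subtype.ext (Subtype.ext hh))
  have hcard : Nat.card ((N : Set F)ᶜ : Set F) ≤ Nat.card (N × ({1}ᶜ : Set H)) := by
    rw [Nat.card_prod, Nat.card_coe_set_eq, Nat.card_coe_set_eq, Set.ncard_compl,
      Set.ncard_compl, Set.ncard_singleton, Nat.mul_sub_one, hf.isComplement'.card_mul_card]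
    rfl
  obtain ⟨⟨n, h, _⟩, hq'⟩ := (hφ.bijective_of_nat_card_le hcard).2 ⟨q, hq⟩
  exact ⟨n, n.2, h, h.2, congrArg Subtype.val hq'⟩

theorem centralizer_le [Finite F] (hf : IsFrobeniusWithKernel N H) {k : F} (hk : k ∈ N)
    (hk1 : k ≠ 1) : centralizer {k} ≤ N := by
  intro c hc
  by_contra hcN
  obtain ⟨n, hn, h, hh, rfl⟩ := hf.exists_conj_eq hcN
  have h1 : h ≠ 1 := by rintro rfl; simp at hcN
  have hcomm : (k * n) * h * (k * n)⁻¹ = n * h * n⁻¹ := by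
    rw [mem_centralizer_singleton_iff] at hc
    calc (k * n) * h * (k * n)⁻¹ = k * (n * h * n⁻¹) * k⁻¹ := by group
      _ = n * h * n⁻¹ := by rw [← hc]; group
  have := (hf.eq_and_eq_of_conj_eq (N.mul_mem hk hn) hn hh hh h1 hcomm).1
  exact hk1 (by simpa using this)

end IsFrobeniusWithKernel

section Centralizers

variable {G : Type*} [Group G]

theorem centralizer_le_centralizer_of_commute {y c : G} (h : Commute y c)
    [IsMulCommutative (centralizer {y})] : centralizer {y} ≤ centralizer {c} := fun _ hu =>
  mem_centralizer_singleton_iff.mpr <|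
    setLike_mul_comm hu (mem_centralizer_singleton_iff.mpr h.symm.eq)

theorem centralizer_eq_of_commute {y c : G} (h : Commute y c)
    [IsMulCommutative (centralizer {y})] [IsMulCommutative (centralizer {c})] :
    centralizer {y} = centralizer {c} :=
  le_antisymm (centralizer_le_centralizer_of_commute h)
    (centralizer_le_centralizer_of_commute h.symm)

theorem centralizer_conj (g x : G) :
    centralizer {g * x * g⁻¹} = ConjAct.toConjAct g • centralizer {x} := by
  ext m
  rw [mem_pointwise_smul_iff_inv_smul_mem, ← ConjAct.toConjAct_inv, ConjAct.toConjAct_smul,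
    mem_centralizer_singleton_iff, mem_centralizer_singleton_iff]
  constructor <;> intro h
  · calc g⁻¹ * m * g⁻¹⁻¹ * x = g⁻¹ * (m * (g * x * g⁻¹)) * g := by group
      _ = x * (g⁻¹ * m * g⁻¹⁻¹) := by rw [h]; group
  · calc m * (g * x * g⁻¹) = g * (g⁻¹ * m * g⁻¹⁻¹ * x) * g⁻¹ := by group
      _ = g * x * g⁻¹ * m := by rw [h]; group

theorem map_subtype_centralizer (A : Subgroup G) (y : A) :
    (centralizer {y}).map A.subtype = centralizer {(y : G)} ⊓ A := by
  ext m
  simp only [mem_map, mem_inf, mem_centralizer_singleton_iff, coe_subtype]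
  constructor
  · rintro ⟨n, hn, rfl⟩
    exact ⟨congrArg Subtype.val hn, n.2⟩
  · rintro ⟨hm, hmA⟩
    exact ⟨⟨m, hmA⟩, Subtype.ext hm, rfl⟩

theorem isMulCommutative_centralizer_of_nacent_subset {a y : G}
    (hna : nacent G ⊆ {⊤, centralizer {a}}) (hy : y ∉ centralizer {a}) :
    IsMulCommutative (centralizer {y}) := by
  by_contra hy'
  have ha : a ∈ centralizer {y} := by
    rcases hna ⟨⟨y, rfl⟩, hy'⟩ with h | h
    · exact h ▸ mem_top a
    · exact h ▸ mem_centralizer_singleton_iff.mpr rfl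
  exact hy (mem_centralizer_singleton_iff.mpr (mem_centralizer_singleton_iff.mp ha).symm)

end Centralizers

section CentralizerCount

variable {G : Type*} [Group G] {a : G}

theorem elemCentralizers_inter_setOf_le
    (hle : ∀ y ∈ centralizer {a}, y ∉ center G → centralizer {y} ≤ centralizer {a}) :
    elemCentralizers G ∩ {S | S ≤ centralizer {a}} =
      map (centralizer {a}).subtype '' elemCentralizers (centralizer {a}) := by
  ext S
  constructor
  · rintro ⟨⟨y, rfl⟩, hS⟩
    have hy : y ∈ centralizer {a} := hS (mem_centralizer_singleton_iff.mpr rfl)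
    exact ⟨centralizer {⟨y, hy⟩}, ⟨⟨y, hy⟩, rfl⟩, by
      rw [map_subtype_centralizer, inf_eq_left.mpr hS]⟩
  · rintro ⟨_, ⟨y, rfl⟩, rfl⟩
    rw [map_subtype_centralizer]
    by_cases hyZ : (y : G) ∈ center G
    · rw [centralizer_eq_top_iff_subset.mpr (Set.singleton_subset_iff.mpr hyZ), top_inf_eq]
      exact ⟨⟨a, rfl⟩, fun _ h => h⟩
    · rw [inf_eq_left.mpr (hle y y.2 hyZ)]
      exact ⟨⟨y, rfl⟩, hle y y.2 hyZ⟩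

theorem elemCentralizers_sdiff_setOf_le (ha : a ∉ center G)
    (hle : ∀ y ∈ centralizer {a}, y ∉ center G → centralizer {y} ≤ centralizer {a}) :
    elemCentralizers G \ {S | S ≤ centralizer {a}} =
      insert ⊤ ((fun y => centralizer {y}) '' (centralizer {a} : Set G)ᶜ) := by
  ext S
  constructor
  · rintro ⟨⟨y, rfl⟩, hS⟩
    by_cases hyZ : y ∈ center G
    · exact Or.inl (centralizer_eq_top_iff_subset.mpr (Set.singleton_subset_iff.mpr hyZ))
    · exact Or.inr ⟨y, fun hy => hS (hle y hy hyZ), rfl⟩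
  · rintro (rfl | ⟨y, hy, rfl⟩)
    · exact ⟨⟨1, (centralizer_eq_top_iff_subset.mpr (by simp [one_mem])).symm⟩,
        fun h => ha (centralizer_eq_top_iff_subset.mp (top_le_iff.mp h) rfl)⟩
    · exact ⟨⟨y, rfl⟩, fun h => hy (h (mem_centralizer_singleton_iff.mpr rfl))⟩

theorem card_elemCentralizers_eq [Finite G] (ha : a ∉ center G)
    (hle : ∀ y ∈ centralizer {a}, y ∉ center G → centralizer {y} ≤ centralizer {a}) :
    Nat.card (elemCentralizers G) = Nat.card (elemCentralizers (centralizer {a})) +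
      ((fun y => centralizer {y}) '' (centralizer {a} : Set G)ᶜ).ncard + 1 := by
  have htop : ⊤ ∉ (fun y : G => centralizer {y}) '' (centralizer {a} : Set G)ᶜ := by
    rintro ⟨y, hy, hyt⟩
    exact hy (center_le_centralizer _ (centralizer_eq_top_iff_subset.mp hyt rfl))
  rw [Nat.card_coe_set_eq, Nat.card_coe_set_eq,
    ← Set.ncard_inter_add_ncard_sdiff_eq_ncard _ {S | S ≤ centralizer {a}},
    elemCentralizers_inter_setOf_le hle, elemCentralizers_sdiff_setOf_le ha hle,
    Set.ncard_image_of_injective _ (map_injective (subtype_injective _)),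
    Set.ncard_insert_of_notMem htop, add_assoc]

end CentralizerCount

namespace IsFrobeniusWithKernel

variable {G Q : Type*} [Group G] [Group Q] {N H : Subgroup Q} (f : G →* Q)

theorem centralizer_le_comap [Finite Q] (hf : IsFrobeniusWithKernel N H) {y : G} (hy : f y ∈ N)
    (hy1 : f y ≠ 1) : centralizer {y} ≤ N.comap f := fun c hc =>
  hf.centralizer_le hy hy1 <| mem_centralizer_singleton_iff.mpr <| by
    rw [← map_mul, ← map_mul, mem_centralizer_singleton_iff.mp hc]

theorem exists_conj_mem_comap [Finite Q] (hf : IsFrobeniusWithKernel N H)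
    (hsurj : Function.Surjective f) {y : G} (hy : f y ∉ N) :
    ∃ g : G, g * y * g⁻¹ ∈ H.comap f := by
  obtain ⟨n, _, h, hh, hq⟩ := hf.exists_conj_eq hy
  obtain ⟨g, rfl⟩ := hsurj n
  refine ⟨g⁻¹, ?_⟩
  rw [mem_comap, map_mul, map_mul, map_inv, ← hq]
  simpa [mul_assoc] using hh

theorem normalizer_comap (hf : IsFrobeniusWithKernel N H) (hsurj : Function.Surjective f) :
    normalizer (H.comap f : Set G) = H.comap f := by
  refine le_antisymm (fun g hg => ?_) le_normalizer
  have := le_normalizer_map f (mem_map_of_mem f hg)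
  rwa [map_comap_eq_self_of_surjective hsurj, hf.normalizer_eq] at this

theorem ncard_orbit_comap (hf : IsFrobeniusWithKernel N H) (hsurj : Function.Surjective f) :
    (MulAction.orbit (ConjAct G) (H.comap f)).ncard = Nat.card N := by
  let toConj : G →* ConjAct G := (ConjAct.toConjAct : G ≃* ConjAct G).toMonoidHom
  have hstab : (MulAction.stabilizer (ConjAct G) (H.comap f)).comap toConj = H.comap f := by
    ext g
    rw [mem_comap, MulAction.mem_stabilizer_iff, MulEquiv.coe_toMonoidHom,
      conjAct_pointwise_smul_iff, hf.normalizer_comap f hsurj]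
  rw [← MulAction.index_stabilizer,
    ← index_comap_of_surjective (f := toConj) _ ConjAct.toConjAct.surjective, hstab,
    index_comap_of_surjective _ hsurj, hf.isComplement'.index_eq_card]

end IsFrobeniusWithKernel

theorem image_centralizer_compl_eq_orbit {G : Type*} [Group G] {a x : G}
    (hna : nacent G ⊆ {⊤, centralizer {a}}) (hnormal : (centralizer {a}).Normal)
    (hx : x ∉ centralizer {a})
    (hconj : ∀ y ∉ centralizer {a}, ∃ g : G, g * y * g⁻¹ ∈ centralizer {x}) :
    (fun y => centralizer {y}) '' (centralizer {a} : Set G)ᶜ =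
      MulAction.orbit (ConjAct G) (centralizer {x}) := by
  have hout (g : G) : g * x * g⁻¹ ∉ centralizer {a} := fun h =>
    hx (by simpa [mul_assoc] using hnormal.conj_mem _ h g⁻¹)
  ext S
  constructor
  · rintro ⟨y, hy, rfl⟩
    obtain ⟨g, hg⟩ := hconj y hy
    have := isMulCommutative_centralizer_of_nacent_subset hna hy
    have := isMulCommutative_centralizer_of_nacent_subset hna (hout g⁻¹)
    have hcomm : Commute y (g⁻¹ * x * g⁻¹⁻¹) := by
      rw [← Commute.conj_iff g]
      simpa [mul_assoc, Commute, SemiconjBy] using mem_centralizer_singleton_iff.mp hg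
    exact ⟨ConjAct.toConjAct g⁻¹, by
      dsimp only; rw [← centralizer_conj, centralizer_eq_of_commute hcomm]⟩
  · rintro ⟨c, rfl⟩
    exact ⟨ConjAct.ofConjAct c * x * (ConjAct.ofConjAct c)⁻¹, hout _, by
      dsimp only; rw [centralizer_conj, ConjAct.toConjAct_ofConjAct]⟩

theorem stmt_13_general {G : Type*} [Group G] [Finite G] (a : G)
    (ha : a ∉ Subgroup.center G)
    (hna : nacent G = {⊤, Subgroup.centralizer {a}})
    (x : G) (hx : x ∉ Subgroup.centralizer ({a} : Set G))
    (hfrob : IsFrobeniusWithKernel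
      ((Subgroup.centralizer ({a} : Set G)).map (QuotientGroup.mk' (Subgroup.center G)))
      ((Subgroup.centralizer ({x} : Set G)).map (QuotientGroup.mk' (Subgroup.center G)))) :
    Nat.card (elemCentralizers G) =
      Nat.card (elemCentralizers ↥(Subgroup.centralizer ({a} : Set G))) +
        Nat.card ((Subgroup.centralizer ({a} : Set G)).map
          (QuotientGroup.mk' (Subgroup.center G))) + 1 := by
  set π := QuotientGroup.mk' (center G)
  have hsurj : Function.Surjective π := QuotientGroup.mk'_surjective _
  have hpull (y : G) : centralizer {y} = ((centralizer {y}).map π).comap π :=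
    (comap_map_eq_self (by rw [QuotientGroup.ker_mk']; exact center_le_centralizer {y})).symm
  have hle : ∀ y ∈ centralizer {a}, y ∉ center G → centralizer {y} ≤ centralizer {a} :=
    fun y hy hyZ => (hpull a).symm ▸
      hfrob.centralizer_le_comap π (mem_map_of_mem π hy) (by simpa [π] using hyZ)
  have hconj : ∀ y ∉ centralizer {a}, ∃ g : G, g * y * g⁻¹ ∈ centralizer {x} := by
    intro y hy
    rw [hpull x]
    exact hfrob.exists_conj_mem_comap π hsurj (fun h => hy ((hpull a).symm ▸ h))
  have hnormal : (centralizer {a}).Normal := by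
    rw [hpull a]
    exact hfrob.1.comap π
  rw [card_elemCentralizers_eq ha hle,
    image_centralizer_compl_eq_orbit hna.subset hnormal hx hconj, hpull x,
    hfrob.ncard_orbit_comap π hsurj]

theorem stmt_13 {G : Type*} [Group G] [Finite G] (a : G)
    (ha : a ∉ Subgroup.center G)
    (hna : nacent G = {⊤, Subgroup.centralizer {a}})
    (hpr : Subgroup.centralizer {a} ≠ (⊤ : Subgroup G))
    (x : G) (hx : x ∉ Subgroup.centralizer ({a} : Set G))
    (hfrob : IsFrobeniusWithKernel
      ((Subgroup.centralizer ({a} : Set G)).map (QuotientGroup.mk' (Subgroup.center G)))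
      ((Subgroup.centralizer ({x} : Set G)).map (QuotientGroup.mk' (Subgroup.center G)))) :
    Nat.card (elemCentralizers G) =
      Nat.card (elemCentralizers ↥(Subgroup.centralizer ({a} : Set G))) +
        Nat.card ((Subgroup.centralizer ({a} : Set G)).map
          (QuotientGroup.mk' (Subgroup.center G))) + 1 :=
  stmt_13_general a ha hna x hx hfrob
end

section
/- Let G be a finite group and a ∈ G \ Z(G) with C(a) non-abelian. Suppose C(a) is a CA-group and G/Z(G) = (C(a)/Z(G)) ⋊ (C(x)/Z(G)) is a Frobenius group with Frobenius kernel C(a)/Z(G) and cyclic Frobenius complement C(x)/Z(G) for some x ∈ G \ C(a). Then nacent(G) = {G, C(a)}. -/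
open Subgroup

/-! Write `π : G → G/Z(G)`. In a Frobenius group `N ⋊ H` every element outside `N` lies in a
conjugate of `H`, and the centralizer of a non-identity element of `N` (of a conjugate of `H`)
stays inside `N` (inside that conjugate). So for non-central `b`: if `π b` lies in the kernel
`π(C(a))`, then `C(b) ≤ C(a)`, and since `C(a)` is a CA-group, `C(b)` is abelian unless
`C(b) = C(a)`; otherwise `π(C(b))` lies in a cyclic conjugate of the complement, so `C(b)` is
abelian because it is cyclic modulo central elements. -/

namespace Subgroup

variable {F : Type*} [Group F]

lemma mem_conjSubgroup_iff {g f : F} {H : Subgroup F} :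
    f ∈ conjSubgroup g H ↔ g⁻¹ * f * g ∈ H := by
  rw [conjSubgroup, mem_map_equiv]
  simp [MulAut.conj_symm_apply]

lemma isCyclic_conjSubgroup (g : F) (H : Subgroup F) [IsCyclic H] :
    IsCyclic (conjSubgroup g H) :=
  (H.equivMapOfInjective _ (MulAut.conj g).injective).isCyclic.mp inferInstance

lemma isMulCommutative_of_le {K L : Subgroup F} (hKL : K ≤ L) [IsMulCommutative L] :
    IsMulCommutative K :=
  le_centralizer_iff_isMulCommutative.mp <|
    hKL.trans <| (le_centralizer L).trans <| centralizer_le hKL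

lemma isMulCommutative_of_isCyclic_map_mk_center (K : Subgroup F)
    [IsCyclic (K.map (QuotientGroup.mk' (center F)))] : IsMulCommutative K := by
  refine (QuotientGroup.mk' (center F)).subgroupMap K
    |>.isMulCommutative_of_isCyclic_of_ker_le_center fun k hk => ?_
  have hkZ : (k : F) ∈ center F := by
    rw [MonoidHom.mem_ker, Subtype.ext_iff] at hk
    simpa using hk
  exact mem_center_iff.mpr fun u => Subtype.ext (mem_center_iff.mp hkZ u)

lemma subgroupOf_centralizer_singleton {L : Subgroup F} {b : F} (hb : b ∈ L) :
    (centralizer {b}).subgroupOf L = centralizer {⟨b, hb⟩} := by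
  ext c
  simp [mem_subgroupOf, mem_centralizer_singleton_iff, Subtype.ext_iff]

end Subgroup

section Frobenius

variable {F : Type*} [Group F]

def IsMalnormal (H : Subgroup F) : Prop :=
  ∀ g : F, g ∉ H → H ⊓ conjSubgroup g H = ⊥

namespace IsMalnormal

variable {H : Subgroup F}

lemma mem_of_conj_mem (hH : IsMalnormal H) {t y : F} (hy : y ∈ H) (hy1 : y ≠ 1)
    (hty : t⁻¹ * y * t ∈ H) : t ∈ H := by
  by_contra ht
  have hmem : y ∈ H ⊓ conjSubgroup t H := ⟨hy, mem_conjSubgroup_iff.mpr hty⟩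
  rw [hH t ht, mem_bot] at hmem
  exact hy1 hmem

lemma centralizer_le_conjSubgroup (hH : IsMalnormal H) {g f : F}
    (hf : f ∈ conjSubgroup g H) (hf1 : f ≠ 1) : centralizer {f} ≤ conjSubgroup g H := by
  intro c hc
  rw [mem_conjSubgroup_iff] at hf ⊢
  have hcf : c * f = f * c := mem_centralizer_singleton_iff.mp hc
  have hf1' : g⁻¹ * f * g ≠ 1 := fun h =>
    hf1 ((conj_eq_one_iff (a := g⁻¹)).mp (by rwa [inv_inv]))
  refine hH.mem_of_conj_mem hf hf1' ?_
  have hconj : (g⁻¹ * c * g)⁻¹ * (g⁻¹ * f * g) * (g⁻¹ * c * g) = g⁻¹ * f * g := by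
    calc _ = g⁻¹ * c⁻¹ * (f * c) * g := by group
      _ = g⁻¹ * f * g := by rw [← hcf]; group
  rwa [hconj]

lemma injective_conj_out (hH : IsMalnormal H) :
    Function.Injective fun p : (F ⧸ H) × ({1}ᶜ : Set H) =>
      p.1.out * (p.2.1 : F) * p.1.out⁻¹ := by
  rintro ⟨q₁, y₁, hy₁⟩ ⟨q₂, y₂, hy₂⟩ heq
  dsimp only at heq
  have hy₁' : (y₁ : F) ≠ 1 := fun h => hy₁ (Subtype.ext h)
  have hconj : (q₁.out⁻¹ * q₂.out)⁻¹ * y₁ * (q₁.out⁻¹ * q₂.out) = y₂ := by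
    calc _ = q₂.out⁻¹ * (q₁.out * y₁ * q₁.out⁻¹) * q₂.out := by group
      _ = y₂ := by rw [heq]; group
  have hq : q₁ = q₂ := by
    rw [← q₁.out_eq', ← q₂.out_eq']
    exact QuotientGroup.eq.mpr (hH.mem_of_conj_mem y₁.2 hy₁' (hconj ▸ y₂.2))
  subst hq
  have : (y₁ : F) = y₂ := mul_left_cancel (mul_right_cancel heq)
  simp [Subtype.ext this]

end IsMalnormal

namespace IsFrobeniusWithKernel

variable {N H : Subgroup F}

lemma normal (hF : IsFrobeniusWithKernel N H) : N.Normal :=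
  hF.1

lemma inf_eq_bot (hF : IsFrobeniusWithKernel N H) : N ⊓ H = ⊥ :=
  hF.2.1

lemma isMalnormal (hF : IsFrobeniusWithKernel N H) : IsMalnormal H :=
  hF.2.2.2.2.2

lemma isComplement'_s16 (hF : IsFrobeniusWithKernel N H) : IsComplement' N H := by
  obtain ⟨hN, hdisj, hsup, -⟩ := hF
  refine isComplement'_of_disjoint_and_mul_eq_univ (disjoint_iff.mpr hdisj) ?_
  rw [← normal_mul, hsup, coe_top]

/-- Frobenius' counting argument: the `[F : H] = |N|` conjugates of `H` meet pairwise
trivially, so their non-identity elements already number `|F| - |N|`. -/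
lemma exists_mem_conjSubgroup [Finite F] (hF : IsFrobeniusWithKernel N H) {f : F}
    (hf : f ∉ N) : ∃ g, f ∈ conjSubgroup g H := by
  set Ψ := fun p : (F ⧸ H) × ({1}ᶜ : Set H) => p.1.out * (p.2.1 : F) * p.1.out⁻¹
  have hrange : Set.range Ψ ⊆ (N : Set F)ᶜ := by
    rintro _ ⟨⟨q, y, hy⟩, rfl⟩ hmem
    have hyN : (y : F) ∈ N := by
      simpa [Ψ, mul_assoc] using hF.normal.conj_mem _ hmem q.out⁻¹
    have hyNH : (y : F) ∈ N ⊓ H := ⟨hyN, y.2⟩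
    rw [hF.inf_eq_bot, mem_bot] at hyNH
    exact hy (Subtype.ext hyNH)
  have hcard : ((N : Set F)ᶜ).ncard ≤ (Set.range Ψ).ncard := by
    rw [Set.ncard_range_of_injective hF.isMalnormal.injective_conj_out, Set.ncard_compl,
      Nat.card_prod, Nat.card_coe_set_eq, Set.ncard_compl, Set.ncard_singleton,
      ← hF.isComplement'_s16.card_mul_card, ← index, hF.isComplement'_s16.index_eq_card,
      ← Nat.card_coe_set_eq, SetLike.coe_sort_coe, Nat.mul_sub_one]
  obtain ⟨⟨q, y⟩, hqy⟩ := (Set.eq_of_subset_of_ncard_le hrange hcard).symm.subset hf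
  exact ⟨q.out, mem_conjSubgroup_iff.mpr (by simp [← hqy, Ψ, mul_assoc])⟩

lemma exists_centralizer_le_conjSubgroup [Finite F] (hF : IsFrobeniusWithKernel N H) {f : F}
    (hf : f ∉ N) : ∃ g, centralizer {f} ≤ conjSubgroup g H := by
  obtain ⟨g, hg⟩ := hF.exists_mem_conjSubgroup hf
  exact ⟨g, hF.isMalnormal.centralizer_le_conjSubgroup hg fun h => hf (h ▸ N.one_mem)⟩

lemma centralizer_le_kernel [Finite F] (hF : IsFrobeniusWithKernel N H) {n : F} (hn : n ∈ N)
    (hn1 : n ≠ 1) : centralizer {n} ≤ N := by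
  intro c hc
  by_contra hcN
  obtain ⟨g, hg⟩ := hF.exists_centralizer_le_conjSubgroup hcN
  have hnH : g⁻¹ * n * g ∈ H :=
    mem_conjSubgroup_iff.mp (hg (mem_centralizer_singleton_iff.mpr
      (mem_centralizer_singleton_iff.mp hc).symm))
  have hnN : g⁻¹ * n * g ∈ N := by simpa using hF.normal.conj_mem n hn g⁻¹
  have : g⁻¹ * n * g ∈ N ⊓ H := ⟨hnN, hnH⟩
  rw [hF.inf_eq_bot, mem_bot] at this
  exact hn1 ((conj_eq_one_iff (a := g⁻¹)).mp (by rwa [inv_inv]))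

end IsFrobeniusWithKernel

end Frobenius

lemma IsCAGroup.centralizer_eq_of_le {G : Type*} [Group G] {L : Subgroup G} (hL : IsCAGroup L)
    {b : G} (hle : centralizer {b} ≤ L) (hnc : ¬ IsMulCommutative (centralizer {b})) :
    centralizer {b} = L := by
  have hb : b ∈ L := hle (mem_centralizer_singleton_iff.mpr rfl)
  have hcen : (⟨b, hb⟩ : L) ∈ center L := by
    by_contra hnot
    have := hL _ hnot
    apply hnc
    rw [← inf_of_le_left hle, ← subgroupOf_map_subtype, subgroupOf_centralizer_singleton hb]
    infer_instance
  refine le_antisymm hle fun c hc => mem_centralizer_singleton_iff.mpr ?_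
  exact congrArg Subtype.val (mem_center_iff.mp hcen ⟨c, hc⟩)

namespace IsFrobeniusWithKernel

variable {G : Type*} [Group G] [Finite G] {N H : Subgroup (G ⧸ center G)}

lemma centralizer_le_comap_of_mk_mem (hF : IsFrobeniusWithKernel N H) {b : G}
    (hbN : QuotientGroup.mk' (center G) b ∈ N) (hbZ : b ∉ center G) :
    centralizer {b} ≤ N.comap (QuotientGroup.mk' (center G)) := by
  have hb1 : QuotientGroup.mk' (center G) b ≠ 1 := by
    simpa [QuotientGroup.eq_one_iff] using hbZ
  rw [← map_le_iff_le_comap]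
  refine (map_centralizer_le_centralizer_image _ _).trans ?_
  simpa using hF.centralizer_le_kernel hbN hb1

lemma isMulCommutative_centralizer_of_mk_notMem [IsCyclic H] (hF : IsFrobeniusWithKernel N H)
    {b : G} (hbN : QuotientGroup.mk' (center G) b ∉ N) : IsMulCommutative (centralizer {b}) := by
  obtain ⟨g, hg⟩ := hF.exists_centralizer_le_conjSubgroup hbN
  have := isCyclic_conjSubgroup g H
  have : IsCyclic ((centralizer {b}).map (QuotientGroup.mk' (center G))) :=
    isCyclic_of_le <| (map_centralizer_le_centralizer_image _ _).trans <| by simpa using hg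
  exact isMulCommutative_of_isCyclic_map_mk_center _

end IsFrobeniusWithKernel

theorem stmt_16_general {G : Type*} [Group G] [Finite G] (a : G)
    (hnab : ¬ IsMulCommutative (Subgroup.centralizer ({a} : Set G)))
    (hCA : IsCAGroup ↥(Subgroup.centralizer ({a} : Set G)))
    (x : G)
    (hfrob : IsFrobeniusWithKernel
      ((Subgroup.centralizer ({a} : Set G)).map (QuotientGroup.mk' (Subgroup.center G)))
      ((Subgroup.centralizer ({x} : Set G)).map (QuotientGroup.mk' (Subgroup.center G))))
    (hcyc : IsCyclic ↥((Subgroup.centralizer ({x} : Set G)).map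
      (QuotientGroup.mk' (Subgroup.center G)))) :
    nacent G = {⊤, Subgroup.centralizer {a}} := by
  have hpre : ((centralizer {a}).map (QuotientGroup.mk' (center G))).comap
      (QuotientGroup.mk' (center G)) = centralizer {a} :=
    comap_map_eq_self (by simpa using center_le_centralizer {a})
  ext K
  constructor
  · rintro ⟨⟨b, rfl⟩, hnc⟩
    by_cases hbZ : b ∈ center G
    · exact .inl (centralizer_eq_top_iff_subset.mpr (by simpa using hbZ))
    by_cases hbN : QuotientGroup.mk' (center G) b ∈ (centralizer {a}).map (QuotientGroup.mk' _)
    · have hle := hpre ▸ hfrob.centralizer_le_comap_of_mk_mem hbN hbZ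
      exact .inr (hCA.centralizer_eq_of_le hle hnc)
    · exact absurd (hfrob.isMulCommutative_centralizer_of_mk_notMem hbN) hnc
  · rintro (rfl | rfl)
    · have htop : centralizer {(1 : G)} = ⊤ := centralizer_eq_top_iff_subset.mpr (by simp)
      exact ⟨⟨1, htop.symm⟩, fun _ => hnab (isMulCommutative_of_le le_top)⟩
    · exact ⟨⟨a, rfl⟩, hnab⟩

theorem stmt_16 {G : Type*} [Group G] [Finite G] (a : G)
    (ha : a ∉ Subgroup.center G)
    (hnab : ¬ IsMulCommutative (Subgroup.centralizer ({a} : Set G)))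
    (hCA : IsCAGroup ↥(Subgroup.centralizer ({a} : Set G)))
    (x : G) (hx : x ∉ Subgroup.centralizer ({a} : Set G))
    (hfrob : IsFrobeniusWithKernel
      ((Subgroup.centralizer ({a} : Set G)).map (QuotientGroup.mk' (Subgroup.center G)))
      ((Subgroup.centralizer ({x} : Set G)).map (QuotientGroup.mk' (Subgroup.center G))))
    (hcyc : IsCyclic ↥((Subgroup.centralizer ({x} : Set G)).map
      (QuotientGroup.mk' (Subgroup.center G)))) :
    nacent G = {⊤, Subgroup.centralizer {a}} :=
  stmt_16_general a hnab hCA x hfrob hcyc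
end
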